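/- arXiv:1602.05547 — 3 statements merged into one kernel-verified Lean document; each statement's English description precedes it below -/
import Mathlib

section
/- A control state p₀ of a one-dimensional BVASS (Q,Δ,F) is unbounded if and only if there is a sequence p₀ t₁ p₁ t₂ ⋯ t_k p_k of states and transitions with k ≤ |Q| and some j < k such that: (i) source(t_i) = p_{i-1} and p_i ∈ targets(t_i) for all i; (ii) p_k = p_j and p_i ≠ p_j for all i < j; (iii) p(0) is coverable for every p in ∪_i targets(t_i); and (iv) for each j < i ≤ k there is n_i ≤ |Q|+1 with: if t_i is a branching transition with side branch p'_i then p'_i(n_i) is coverable, else n_i = 0; and Σ_{i=j+1}^k n_i > Σ_{i=j+1}^k effect(t_i). -/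
/-- A one-dimensional branching vector addition system with states:
branching transitions `br`, unary transitions `un` with update in `{-1,0,1}`,
and final states `final`. -/
structure BVASS1 (Q : Type) where
  br : Q → Q → Q → Prop
  un : Q → ℤ → Q → Prop
  un_small : ∀ q z p, un q z p → z = -1 ∨ z = 0 ∨ z = 1
  final : Q → Prop

/-- A finite binary tree with nodes given by a prefix-closed set of words over
`Bool` and labels in `Q × ℕ`. -/
structure BTree (Q : Type) where
  dom : Set (List Bool)
  label : List Bool → Q × ℕ
  finite : dom.Finite
  root_mem : ([] : List Bool) ∈ dom
  prefixClosed : ∀ ⦃u v : List Bool⦄, v ∈ dom → u <+: v → u ∈ dom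

/-- `u` is a strict ancestor of `v`. -/
def StrictPrefix (u v : List Bool) : Prop := u <+: v ∧ u ≠ v

/-- `u` is the lowest common ancestor of `v` and `w`. -/
def IsLCA (u v w : List Bool) : Prop :=
  u <+: v ∧ u <+: w ∧ ∀ u', u' <+: v → u' <+: w → u' <+: u

namespace BTree

variable {Q : Type}

def state (T : BTree Q) (u : List Bool) : Q := (T.label u).1

def counter (T : BTree Q) (u : List Bool) : ℕ := (T.label u).2

def IsLeaf (T : BTree Q) (u : List Bool) : Prop :=
  u ∈ T.dom ∧ ∀ b : Bool, u ++ [b] ∉ T.dom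

/-- The subtree of `T` rooted at node `u`. -/
def subtree (T : BTree Q) (u : List Bool) (hu : u ∈ T.dom) : BTree Q where
  dom := {x | u ++ x ∈ T.dom}
  label := fun x => T.label (u ++ x)
  finite := Set.Finite.preimage
    (Function.Injective.injOn fun a b h => by simpa using h) T.finite
  root_mem := by simpa using hu
  prefixClosed := by
    rintro a c hc ⟨t, rfl⟩
    exact T.prefixClosed hc ⟨t, by simp⟩

/-- All counter values in the tree are at most `j`. -/
def Bounded (T : BTree Q) (j : ℕ) : Prop := ∀ u ∈ T.dom, T.counter u ≤ j

/-- All counter values, except possibly the root's, are at most `j`. -/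
def AlmostBounded (T : BTree Q) (j : ℕ) : Prop :=
  ∀ u ∈ T.dom, u ≠ [] → T.counter u ≤ j

/-- A node is increasing if it has a strict ancestor with the same state
and a strictly smaller counter value. -/
def Increasing (T : BTree Q) (v : List Bool) : Prop :=
  ∃ u ∈ T.dom, StrictPrefix u v ∧ T.state u = T.state v ∧ T.counter u < T.counter v

/-- `u` is the anchor of the increasing node `v`: the maximal strict ancestor of `v`
with the same state and strictly smaller counter value. -/
def IsAnchorOf (T : BTree Q) (u v : List Bool) : Prop :=
  u ∈ T.dom ∧ StrictPrefix u v ∧ T.state u = T.state v ∧ T.counter u < T.counter v ∧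
    ∀ u' ∈ T.dom, StrictPrefix u' v → T.state u' = T.state v →
      T.counter u' < T.counter v → u' <+: u

/-- The tree is exclusive: the least common ancestor of any two distinct increasing
leaves is a strict ancestor of at least one of their anchors. -/
def Exclusive (T : BTree Q) : Prop :=
  ∀ v w, T.IsLeaf v → T.IsLeaf w → T.Increasing v → T.Increasing w → v ≠ w →
    ∀ a b l, T.IsAnchorOf a v → T.IsAnchorOf b w → IsLCA l v w →
      StrictPrefix l a ∨ StrictPrefix l b

end BTree

namespace BVASS1

variable {Q : Type}

/-- `T` is a partial reachability tree of `B`: at every inner node either a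
branching transition splits the counter over two children, or a unary transition
changes the counter by `z` along a single-child edge. -/
def IsPRT (B : BVASS1 Q) (T : BTree Q) : Prop :=
  ∀ u ∈ T.dom, ¬ T.IsLeaf u →
    ((u ++ [false] ∈ T.dom ∧ u ++ [true] ∈ T.dom ∧
        B.br (T.state u) (T.state (u ++ [false])) (T.state (u ++ [true])) ∧
        T.counter u = T.counter (u ++ [false]) + T.counter (u ++ [true])) ∨
     (u ++ [false] ∈ T.dom ∧ u ++ [true] ∉ T.dom ∧
        ∃ z : ℤ, B.un (T.state u) z (T.state (u ++ [false])) ∧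
          (T.counter (u ++ [false]) : ℤ) = (T.counter u : ℤ) + z))

/-- `T` is a (full) reachability tree of `B`: a partial reachability tree all of
whose leaves are accepting (final state, counter zero). -/
def IsRT (B : BVASS1 Q) (T : BTree Q) : Prop :=
  B.IsPRT T ∧ ∀ u, T.IsLeaf u → B.final (T.state u) ∧ T.counter u = 0

/-- The configuration `q(n)` is reachable. -/
def Reachable (B : BVASS1 Q) (q : Q) (n : ℕ) : Prop :=
  ∃ T : BTree Q, B.IsRT T ∧ T.label [] = (q, n)

/-- The reachability set of a control state. -/
def reachSet (B : BVASS1 Q) (q : Q) : Set ℕ := {n | B.Reachable q n}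

/-- The configuration `q(n)` is coverable. -/
def Coverable (B : BVASS1 Q) (q : Q) (n : ℕ) : Prop :=
  ∃ m, n ≤ m ∧ B.Reachable q m

/-- `T` is expandable: exclusive, every leaf is accepting or increasing, and every
increasing leaf with its anchor induces a positive residue-reachability instance. -/
def Expandable (B : BVASS1 Q) (T : BTree Q) : Prop :=
  T.Exclusive ∧
  (∀ v, T.IsLeaf v → (B.final (T.state v) ∧ T.counter v = 0) ∨ T.Increasing v) ∧
  (∀ v u, T.IsLeaf v → T.IsAnchorOf u v →
    ∃ l, B.Reachable (T.state v) l ∧ T.counter v ≤ l ∧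
      l ≡ T.counter v [MOD T.counter v - T.counter u])

end BVASS1

/-- A transition of a one-dimensional BVASS, as a datum. -/
inductive BTrans (Q : Type) : Type
  | br : Q → Q → Q → BTrans Q
  | un : Q → ℤ → Q → BTrans Q

namespace BTrans

variable {Q : Type}

/-- The transition belongs to the BVASS `B`. -/
def mem (B : BVASS1 Q) : BTrans Q → Prop
  | .br q p p' => B.br q p p'
  | .un q z p => B.un q z p

/-- The source state of a transition. -/
def src : BTrans Q → Q
  | .br q _ _ => q
  | .un q _ _ => q

/-- The target states of a transition. -/
def tgts : BTrans Q → Set Q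
  | .br _ p p' => {p, p'}
  | .un _ _ p => {p}

/-- The effect of a transition: `0` for branching, `z` for unary. -/
def eff : BTrans Q → ℤ
  | .br _ _ _ => 0
  | .un _ z _ => z

end BTrans

/-!
Unboundedness of `p₀` is witnessed by a lasso: a path of transitions from `p₀` into a simple
cycle whose side branches can take more counter than the effects of the cycle add, i.e. whose
gain `∑ side - ∑ effect` is positive.

Given a lasso, derivations can be pumped. Read backwards, each step turns a reachable value `x`
of its target into the reachable value `x + gain` of its source, as long as all intermediate
values stay nonnegative. Starting a round of the cycle at a state where the cumulative gain is
maximal guarantees this, so the reachable values along the cycle are unbounded, and the stem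
carries them back to `p₀`.

Conversely, take a derivation of `p₀(N)` with `N ≥ 2 ^ |Q|` and follow from the root always
the child with the larger counter. The counter at most halves at each step and ends at `0`, so
some state recurs further down with a smaller counter; the segment in between is a closed walk
of positive gain. Loop erasure turns it into a simple cycle reached by a simple path that avoids
it, of total length at most `|Q|`. Side values may be capped at `|Q| + 1`, since the effects
along the cycle add at most `|Q|`.
-/

theorem List.exists_eq_append_cons_of_not_nodup_map {α β : Type*} (f : α → β) :
    ∀ {l : List α}, ¬(l.map f).Nodup →
      ∃ X e Y e' Z, l = X ++ e :: Y ++ e' :: Z ∧ f e = f e'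
  | [], h => absurd List.nodup_nil h
  | a :: l, h => by
    rw [List.map_cons, List.nodup_cons, not_and_or, not_not] at h
    rcases h with h | h
    · obtain ⟨e', he', hfe'⟩ := List.mem_map.1 h
      obtain ⟨Y, Z, rfl⟩ := List.append_of_mem he'
      exact ⟨[], a, Y, e', Z, rfl, hfe'.symm⟩
    · obtain ⟨X, e, Y, e', Z, rfl, hf⟩ := exists_eq_append_cons_of_not_nodup_map f h
      exact ⟨a :: X, e, Y, e', Z, rfl, hf⟩

theorem List.sum_range_length_getD {α M : Type*} [AddCommMonoid M] (f : α → M) (l : List α)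
    (d : α) : ∑ i ∈ Finset.range l.length, f (l.getD i d) = (l.map f).sum := by
  induction l with
  | nil => simp
  | cons a l ih =>
    rw [List.length_cons, Finset.sum_range_succ', List.map_cons, List.sum_cons, add_comm, ← ih]
    rfl

theorem List.sum_Icc_getD_append {α M : Type*} [AddCommMonoid M] (f : α → M) (d : α)
    (l₁ l₂ : List α) :
    ∑ i ∈ Finset.Icc (l₁.length + 1) (l₁ ++ l₂).length, f ((l₁ ++ l₂).getD (i - 1) d) =
      (l₂.map f).sum := by
  rw [List.length_append, ← Finset.Ico_add_one_right_eq_Icc, Finset.sum_Ico_eq_sum_range,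
    ← sum_range_length_getD]
  refine Finset.sum_congr (by congr 1; omega) fun i _ => ?_
  rw [show l₁.length + 1 + i - 1 = l₁.length + i by omega,
    List.getD_append_right _ _ _ _ (by omega), Nat.add_sub_cancel_left]

theorem Finset.min_sum_le_sum_min {ι : Type*} (s : Finset ι) (f : ι → ℕ) (c : ℕ) :
    min (∑ i ∈ s, f i) c ≤ ∑ i ∈ s, min (f i) c := by
  classical
  induction s using Finset.induction_on with
  | empty => simp
  | insert a s ha ih =>
    rw [Finset.sum_insert ha, Finset.sum_insert ha]
    omega

section Walk

variable {V E : Type*}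

def IsWalk (src dst : E → V) : V → List E → V → Prop
  | x, [], y => x = y
  | x, e :: l, y => src e = x ∧ IsWalk src dst (dst e) l y

variable {src dst : E → V}

theorem isWalk_append {x z : V} {l₁ l₂ : List E} :
    IsWalk src dst x (l₁ ++ l₂) z ↔ ∃ y, IsWalk src dst x l₁ y ∧ IsWalk src dst y l₂ z := by
  induction l₁ generalizing x with
  | nil => simp [IsWalk]
  | cons e l₁ ih => simp [IsWalk, ih, and_assoc]

namespace IsWalk

theorem exists_prefix_src {x y : V} {l : List E} (h : IsWalk src dst x l y) {e : E}
    (he : e ∈ l) : ∃ l', l' <+: l ∧ IsWalk src dst x l' (src e) := by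
  obtain ⟨s, t, rfl⟩ := List.append_of_mem he
  obtain ⟨z, hs, ht⟩ := isWalk_append.1 h
  exact ⟨s, List.prefix_append _ _, ht.1 ▸ hs⟩

theorem rotate {x : V} {l : List E} (h : IsWalk src dst x l x) {e : E} (he : e ∈ l) :
    ∃ l', l'.Perm l ∧ IsWalk src dst (src e) l' (src e) := by
  obtain ⟨s, t, rfl⟩ := List.append_of_mem he
  obtain ⟨z, hs, ht⟩ := isWalk_append.1 h
  obtain rfl : src e = z := ht.1
  exact ⟨e :: t ++ s, List.perm_append_comm, isWalk_append.2 ⟨x, ht, hs⟩⟩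

theorem cut {x y : V} {X Y Z : List E} {e e' : E}
    (h : IsWalk src dst x (X ++ e :: Y ++ e' :: Z) y) (he : src e = src e') :
    IsWalk src dst x (X ++ e' :: Z) y ∧ IsWalk src dst (src e) (e :: Y) (src e) := by
  obtain ⟨z, hXY, hZ⟩ := isWalk_append.1 h
  obtain ⟨w, hX, hY⟩ := isWalk_append.1 hXY
  obtain rfl : src e = w := hY.1
  obtain rfl : src e' = z := hZ.1
  exact ⟨isWalk_append.2 ⟨_, hX, he ▸ hZ⟩, he ▸ hY⟩

theorem exists_sublist_nodup {x y : V} {l : List E} (h : IsWalk src dst x l y) :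
    ∃ l', l'.Sublist l ∧ IsWalk src dst x l' y ∧ (l'.map src).Nodup := by
  induction hn : l.length using Nat.strong_induction_on generalizing l with
  | _ n ih =>
  by_cases hnd : (l.map src).Nodup
  · exact ⟨l, List.Sublist.refl l, h, hnd⟩
  obtain ⟨X, e, Y, e', Z, rfl, he⟩ := List.exists_eq_append_cons_of_not_nodup_map src hnd
  obtain ⟨l', hl', hw, hnd'⟩ := ih _ (by simp at hn ⊢; omega) (h.cut he).1 rfl
  exact ⟨l', hl'.trans (by simp), hw, hnd'⟩

theorem exists_sublist_nodup_cycle (w : E → ℤ) {x : V} {l : List E} (h : IsWalk src dst x l x)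
    (hw : 0 < (l.map w).sum) :
    ∃ l' y, l'.Sublist l ∧ l' ≠ [] ∧ IsWalk src dst y l' y ∧ 0 < (l'.map w).sum ∧
      (l'.map src).Nodup := by
  induction hn : l.length using Nat.strong_induction_on generalizing x l with
  | _ n ih =>
  by_cases hnd : (l.map src).Nodup
  · exact ⟨l, x, List.Sublist.refl l, by rintro rfl; simp at hw, h, hw, hnd⟩
  obtain ⟨X, e, Y, e', Z, rfl, he⟩ := List.exists_eq_append_cons_of_not_nodup_map src hnd
  obtain ⟨hout, hin⟩ := h.cut he
  -- the weight of `l` splits between the inner cycle `e :: Y` and the outer one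
  simp only [List.map_append, List.map_cons, List.sum_append, List.sum_cons] at hw
  by_cases hY : 0 < ((e :: Y).map w).sum
  · obtain ⟨l', y, hl', h'⟩ := ih _ (by simp at hn ⊢; omega) hin hY rfl
    exact ⟨l', y, hl'.trans (by simp), h'⟩
  · obtain ⟨l', y, hl', h'⟩ := ih _ (by simp at hn ⊢; omega) hout
      (by simp only [List.map_append, List.map_cons, List.sum_append, List.sum_cons] at hY ⊢
          omega) rfl
    exact ⟨l', y, hl'.trans (by simp), h'⟩

theorem exists_prefix_first_mem {x y : V} {l : List E} (h : IsWalk src dst x l y) {S : Set V}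
    (hy : y ∈ S) : ∃ l' z, l' <+: l ∧ z ∈ S ∧ IsWalk src dst x l' z ∧ ∀ e ∈ l', src e ∉ S := by
  induction l generalizing x with
  | nil => exact ⟨[], x, List.prefix_rfl, h ▸ hy, rfl, by simp⟩
  | cons e l ih =>
    by_cases hx : x ∈ S
    · exact ⟨[], x, List.nil_prefix, hx, rfl, by simp⟩
    obtain ⟨l', z, hl', hz, hw, hS⟩ := ih h.2
    refine ⟨e :: l', z, List.cons_prefix_cons.2 ⟨rfl, hl'⟩, hz, ⟨h.1, hw⟩, ?_⟩
    rintro e' (_ | ⟨_, he'⟩)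
    · exact h.1 ▸ hx
    · exact hS e' he'

theorem exists_lasso (w : E → ℤ) {x r : V} {l C : List E} (hl : IsWalk src dst x l r)
    (hC : IsWalk src dst r C r) (hw : 0 < (C.map w).sum) :
    ∃ stem cyc y, (∀ e ∈ stem ++ cyc, e ∈ l ++ C) ∧ cyc ≠ [] ∧ IsWalk src dst x stem y ∧
      IsWalk src dst y cyc y ∧ 0 < (cyc.map w).sum ∧ ((stem ++ cyc).map src).Nodup := by
  obtain ⟨C', r', hC'C, hne, hC', hw', hnd'⟩ := hC.exists_sublist_nodup_cycle w hw
  obtain ⟨e₀, he₀⟩ := List.exists_mem_of_ne_nil C' hne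
  obtain ⟨l₀, hl₀, hw₀⟩ := (isWalk_append.2 ⟨r, hl, hC⟩).exists_prefix_src
    (List.mem_append_right l (hC'C.subset he₀))
  obtain ⟨l₁, y, hl₁, hy, hw₁, hS⟩ :=
    hw₀.exists_prefix_first_mem (S := {v | v ∈ C'.map src}) (List.mem_map_of_mem he₀)
  obtain ⟨stem, hstem, hws, hnds⟩ := hw₁.exists_sublist_nodup
  obtain ⟨e, he, rfl⟩ := List.mem_map.1 hy
  obtain ⟨cyc, hperm, hcyc⟩ := hC'.rotate he
  refine ⟨stem, cyc, src e, ?_, fun h => hne (h ▸ hperm).symm.eq_nil, hws, hcyc,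
    (hperm.map w).sum_eq ▸ hw', ?_⟩
  · rintro e' he'
    rcases List.mem_append.1 he' with he' | he'
    · exact hl₀.subset (hl₁.subset (hstem.subset he'))
    · exact List.mem_append_right l (hC'C.subset (hperm.mem_iff.1 he'))
  · rw [List.map_append, List.nodup_append]
    refine ⟨hnds, (hperm.map src).nodup_iff.2 hnd', ?_⟩
    rintro _ ha _ hb rfl
    obtain ⟨e', he', rfl⟩ := List.mem_map.1 ha
    exact hS e' (hstem.subset he') ((hperm.map src).mem_iff.1 hb)

theorem src_getElem {x y : V} {l : List E} (h : IsWalk src dst x l y) (z : V) {i : ℕ}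
    (hi : i < l.length) : src l[i] = (x :: l.map dst).getD i z := by
  induction l generalizing x i with
  | nil => simp at hi
  | cons e l ih =>
    cases i with
    | zero => exact h.1
    | succ i => simpa using ih h.2 (by simpa using hi)

theorem getD_ne_of_nodup {x y : V} {l : List E} (h : IsWalk src dst x l y)
    (hnd : (l.map src).Nodup) (z : V) {i j : ℕ} (hij : i < j) (hj : j < l.length) :
    (x :: l.map dst).getD i z ≠ (x :: l.map dst).getD j z := by
  rw [← h.src_getElem z (hij.trans hj), ← h.src_getElem z hj]
  intro heq
  have := (hnd.getElem_inj_iff (i := i) (j := j) (hi := by simp; omega) (hj := by simpa)).1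
    (by simpa using heq)
  omega

theorem getD_length {x y : V} {l : List E} (h : IsWalk src dst x l y) (z : V) :
    (x :: l.map dst).getD l.length z = y := by
  induction l generalizing x with
  | nil => exact h
  | cons e l ih => simpa using ih h.2

theorem getD_length_append {x y : V} {l₁ : List E} (h : IsWalk src dst x l₁ y) (l₂ : List E)
    (z : V) : (x :: (l₁ ++ l₂).map dst).getD l₁.length z = y := by
  rw [List.map_append, ← List.cons_append, List.getD_append _ _ _ _ (by simp)]
  exact h.getD_length z

end IsWalk

end Walk

namespace Pumping

/- `R i x` says that the counter value `x` is reachable at the `i`-th state of a path. Stepping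
back from position `i + 1` to `i` adds the gain `P (i + 1) - P i` of that step to the counter, as
long as the result stays a natural number. -/
variable {R : ℕ → ℕ → Prop} {P : ℕ → ℤ} {k : ℕ}

theorem climb (hstep : ∀ i < k, ∀ x y : ℕ, R (i + 1) x → (y : ℤ) = x + P (i + 1) - P i → R i y)
    {a b x : ℕ} (hab : a ≤ b) (hbk : b ≤ k) (hx : R b x)
    (hpos : ∀ i, a ≤ i → i ≤ b → P i ≤ x + P b) :
    ∀ y : ℕ, (y : ℤ) = x + P b - P a → R a y := by
  induction b, hab using Nat.le_induction generalizing x with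
  | base =>
    intro y hy
    obtain rfl : y = x := by omega
    exact hx
  | succ b hab ih =>
    have hb := hpos b hab (by omega)
    have hx' := hstep b (by omega) x (x + P (b + 1) - P b).toNat hx (by omega)
    intro y hy
    exact ih (by omega) hx' (fun i h1 h2 => by have := hpos i h1 (by omega); omega) y (by omega)

theorem exists_unbounded_of_lt
    (hstep : ∀ i < k, ∀ x y : ℕ, R (i + 1) x → (y : ℤ) = x + P (i + 1) - P i → R i y)
    {j : ℕ} (hjk : j < k) (hcyc : ∀ x, R j x → R k x) (hne : ∀ i, j < i → i ≤ k → ∃ x, R i x)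
    (hgain : P j < P k) : ∃ i ≤ k, ∀ n, ∃ x, n ≤ x ∧ R i x := by
  obtain ⟨i, hi, hmax⟩ := (Finset.Ioc j k).exists_max_image P ⟨k, by simp [hjk]⟩
  rw [Finset.mem_Ioc] at hi
  have hle : ∀ l, j ≤ l → l ≤ k → P l ≤ P i := fun l h1 h2 => by
    rcases h1.eq_or_lt with rfl | h1
    · have := hmax k (by simp [hjk]); omega
    · exact hmax l (Finset.mem_Ioc.2 ⟨h1, h2⟩)
  -- Started at the maximum `i` of the potential, a round of the cycle keeps the counter
  -- nonnegative and adds `P k - P j` to it.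
  have round : ∀ x, R i x → ∀ y : ℕ, (y : ℤ) = x + (P k - P j) → R i y := by
    intro x hx y hy
    have hji := hle j le_rfl hjk.le
    have hj := climb hstep hi.1.le hi.2 hx (fun l h1 _ => by have := hle l h1 (by omega); omega)
      (x + P i - P j).toNat (by omega)
    exact climb hstep hi.2 le_rfl (hcyc _ hj)
      (fun l h1 h2 => by have := hle l (by omega) h2; omega) y (by omega)
  refine ⟨i, hi.2, fun n => ?_⟩
  induction n with
  | zero =>
    obtain ⟨x, hx⟩ := hne i hi.1 hi.2
    exact ⟨x, by omega, hx⟩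
  | succ n ih =>
    obtain ⟨x, hnx, hx⟩ := ih
    exact ⟨(x + (P k - P j)).toNat, by omega, round x hx _ (by omega)⟩

theorem infinite_of_unbounded
    (hstep : ∀ i < k, ∀ x y : ℕ, R (i + 1) x → (y : ℤ) = x + P (i + 1) - P i → R i y)
    {i : ℕ} (hik : i ≤ k) (hi : ∀ n, ∃ x, n ≤ x ∧ R i x) : {x | R 0 x}.Infinite := by
  obtain ⟨l₀, -, hM⟩ := (Finset.range (i + 1)).exists_max_image P ⟨0, by simp⟩
  refine Set.infinite_of_forall_exists_gt fun n => ?_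
  obtain ⟨x, hnx, hx⟩ := hi (n + 1 + (P l₀ - P i)).toNat
  have h0 := hM 0 (by simp)
  exact ⟨(x + P i - P 0).toNat, climb hstep (Nat.zero_le i) hik hx
    (fun l _ h2 => by have := hM l (by simp; omega); omega) _ (by omega), by omega⟩

theorem infinite_of_cycle_gain {g : ℕ → ℤ}
    (hstep : ∀ i, 1 ≤ i → i ≤ k → ∀ x y : ℕ, R i x → (y : ℤ) = x + g i → R (i - 1) y)
    {j : ℕ} (hjk : j < k) (hcyc : ∀ x, R j x → R k x) (hne : ∀ i, j < i → i ≤ k → ∃ x, R i x)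
    (hgain : 0 < ∑ i ∈ Finset.Icc (j + 1) k, g i) : {x | R 0 x}.Infinite := by
  obtain ⟨P, hP⟩ : ∃ P : ℕ → ℤ, ∀ i, P i = ∑ l ∈ Finset.Ioc 0 i, g l := ⟨_, fun _ => rfl⟩
  have hstep' : ∀ i < k, ∀ x y : ℕ, R (i + 1) x → (y : ℤ) = x + P (i + 1) - P i → R i y :=
    fun i hi x y hx hy => hstep (i + 1) (by omega) hi x y hx
      (by rw [hP, hP, Finset.sum_Ioc_succ_top (Nat.zero_le i)] at hy; omega)
  have hPjk : P j < P k := by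
    rw [Finset.Icc_add_one_left_eq_Ioc] at hgain
    rw [hP, hP, ← Finset.sum_Ioc_consecutive _ (Nat.zero_le j) hjk.le]
    omega
  obtain ⟨i, hik, hi⟩ := exists_unbounded_of_lt hstep' hjk hcyc hne hPjk
  exact infinite_of_unbounded hstep' hik hi

end Pumping

theorem BTrans.eff_le_one {Q : Type} {B : BVASS1 Q} {t : BTrans Q} (ht : t.mem B) :
    t.eff ≤ 1 := by
  cases t with
  | br => simp [BTrans.eff]
  | un q z p =>
    have := B.un_small q z p ht
    simp only [BTrans.eff]
    omega

namespace BTree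

variable {Q : Type}

theorem ext {T T' : BTree Q} (hdom : T.dom = T'.dom) (hlabel : T.label = T'.label) : T = T' := by
  cases T; cases T'; cases hdom; cases hlabel; rfl

theorem ncard_subtree_lt (T : BTree Q) {b : Bool} (hb : [b] ∈ T.dom) :
    (T.subtree [b] hb).dom.ncard < T.dom.ncard := by
  calc (T.subtree [b] hb).dom.ncard = ((b :: ·) '' (T.subtree [b] hb).dom).ncard :=
        (Set.ncard_image_of_injective _ List.cons_injective).symm
    _ ≤ (T.dom \ {[]}).ncard :=
        Set.ncard_le_ncard (by rintro _ ⟨x, hx, rfl⟩; exact ⟨hx, by simp⟩) T.finite.sdiff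
    _ < T.dom.ncard := Set.ncard_sdiff_singleton_lt_of_mem T.root_mem T.finite

/-- The tree with root label `x`, left subtree `l` and right subtree `r` (where present). -/
def node (x : Q × ℕ) (l r : Option (BTree Q)) : BTree Q where
  dom := insert [] {v | ∃ b w, v = b :: w ∧ ∃ T ∈ cond b r l, w ∈ T.dom}
  label
    | [] => x
    | b :: w => ((cond b r l).map fun T => T.label w).getD x
  finite := by
    refine Set.Finite.insert _ <| Set.Finite.subset
      (s := ⋃ b, ⋃ T ∈ cond b r l, (b :: ·) '' T.dom) (Set.finite_iUnion fun b => ?_) ?_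
    · cases cond b r l with
      | none => simp
      | some T => simpa using T.finite.image _
    · rintro _ ⟨b, w, rfl, T, hT, hw⟩
      simp only [Set.mem_iUnion]
      exact ⟨b, T, hT, w, hw, rfl⟩
  root_mem := Set.mem_insert _ _
  prefixClosed := by
    rintro (_ | ⟨c, u⟩) v hv huv
    · exact Set.mem_insert _ _
    · obtain ⟨b, w, rfl, T, hT, hw⟩ := hv.resolve_left (by rintro rfl; simp at huv)
      obtain ⟨rfl, hu⟩ := List.cons_prefix_cons.1 huv
      exact Or.inr ⟨c, u, rfl, T, hT, T.prefixClosed hw hu⟩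

@[simp] theorem cons_mem_node_dom {x : Q × ℕ} {l r : Option (BTree Q)} {b : Bool}
    {w : List Bool} : b :: w ∈ (node x l r).dom ↔ ∃ T ∈ cond b r l, w ∈ T.dom := by
  cases b <;> simp [node]

theorem subtree_node {x : Q × ℕ} {l r : Option (BTree Q)} {b : Bool} {T : BTree Q}
    (hT : cond b r l = some T) (hb : [b] ∈ (node x l r).dom) : (node x l r).subtree [b] hb = T :=
  ext (by ext w; simp [subtree, hT]) (by funext w; simp [subtree, node, hT])

end BTree

namespace BVASS1

variable {Q : Type} {B : BVASS1 Q}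

def IsRTAt (B : BVASS1 Q) (T : BTree Q) (u : List Bool) : Prop :=
  (T.IsLeaf u → B.final (T.state u) ∧ T.counter u = 0) ∧
  (¬ T.IsLeaf u →
    ((u ++ [false] ∈ T.dom ∧ u ++ [true] ∈ T.dom ∧
        B.br (T.state u) (T.state (u ++ [false])) (T.state (u ++ [true])) ∧
        T.counter u = T.counter (u ++ [false]) + T.counter (u ++ [true])) ∨
     (u ++ [false] ∈ T.dom ∧ u ++ [true] ∉ T.dom ∧
        ∃ z : ℤ, B.un (T.state u) z (T.state (u ++ [false])) ∧
          (T.counter (u ++ [false]) : ℤ) = (T.counter u : ℤ) + z)))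

theorem isRT_iff_forall_isRTAt {T : BTree Q} : B.IsRT T ↔ ∀ u ∈ T.dom, B.IsRTAt T u :=
  ⟨fun h u hu => ⟨h.2 u, h.1 u hu⟩,
   fun h => ⟨fun u hu => (h u hu).2, fun u hu => (h u hu.1).1 hu⟩⟩

theorem isRTAt_subtree {T : BTree Q} {b : Bool} (hb : [b] ∈ T.dom) {w : List Bool} :
    B.IsRTAt (T.subtree [b] hb) w ↔ B.IsRTAt T (b :: w) :=
  Iff.rfl

theorem isRT_iff {T : BTree Q} :
    B.IsRT T ↔ B.IsRTAt T [] ∧ ∀ b (hb : [b] ∈ T.dom), B.IsRT (T.subtree [b] hb) := by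
  simp only [isRT_iff_forall_isRTAt, isRTAt_subtree]
  refine ⟨fun h => ⟨h [] T.root_mem, fun b _ w hw => h _ hw⟩, ?_⟩
  rintro ⟨hroot, hsub⟩ (_ | ⟨b, w⟩) hu
  · exact hroot
  · exact hsub b (T.prefixClosed hu ⟨w, rfl⟩) w hu

inductive Reach (B : BVASS1 Q) : Q → ℕ → Prop
  | final {q} : B.final q → B.Reach q 0
  | un {q p z} {n n' : ℕ} : B.un q z p → B.Reach p n' → (n' : ℤ) = n + z → B.Reach q n
  | br {q a b m m'} : B.br q a b → B.Reach a m → B.Reach b m' → B.Reach q (m + m')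

theorem IsRT.reach {T : BTree Q} (hT : B.IsRT T) : B.Reach (T.state []) (T.counter []) := by
  induction hn : T.dom.ncard using Nat.strong_induction_on generalizing T with
  | _ n ih =>
  obtain ⟨⟨hleaf, hinner⟩, hsub⟩ := isRT_iff.1 hT
  have child : ∀ b (hb : [b] ∈ T.dom), B.Reach (T.state [b]) (T.counter [b]) := fun b hb =>
    ih _ (hn ▸ T.ncard_subtree_lt hb) (hsub b hb) rfl
  by_cases hl : T.IsLeaf []
  · obtain ⟨hf, h0⟩ := hleaf hl
    exact h0 ▸ Reach.final hf
  · rcases hinner hl with ⟨hf, ht, hbr, hc⟩ | ⟨hf, -, z, hun, hc⟩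
    · exact hc ▸ Reach.br hbr (child _ hf) (child _ ht)
    · exact Reach.un hun (child _ hf) hc

theorem Reach.reachable {q : Q} {n : ℕ} (h : B.Reach q n) : B.Reachable q n := by
  induction h with
  | @final q hq =>
    refine ⟨.node (q, 0) none none, isRT_iff.2 ⟨⟨fun _ => ⟨hq, rfl⟩, fun hl => ?_⟩, ?_⟩, rfl⟩
    · exact absurd ⟨BTree.root_mem _, fun b => by cases b <;> simp⟩ hl
    · intro b hb; cases b <;> simp at hb
  | @un q p z n n' hun _ hc ih =>
    obtain ⟨T, hT, hTl⟩ := ih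
    have hf : [false] ∈ (BTree.node (q, n) (some T) none).dom := by simpa using T.root_mem
    refine ⟨.node (q, n) (some T) none,
      isRT_iff.2 ⟨⟨fun hl => absurd hf (hl.2 false), fun _ => ?_⟩, ?_⟩, rfl⟩
    · refine Or.inr ⟨hf, by simp, z, ?_, ?_⟩
      · simpa [BTree.state, BTree.node, hTl] using hun
      · simpa [BTree.counter, BTree.node, hTl] using hc
    · rintro (_ | _) hb
      · rwa [BTree.subtree_node rfl]
      · simp at hb
  | @br q a b m m' hbr _ _ iha ihb =>
    obtain ⟨T₁, hT₁, hT₁l⟩ := iha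
    obtain ⟨T₂, hT₂, hT₂l⟩ := ihb
    have hf : [false] ∈ (BTree.node (q, m + m') (some T₁) (some T₂)).dom := by
      simpa using T₁.root_mem
    have ht : [true] ∈ (BTree.node (q, m + m') (some T₁) (some T₂)).dom := by
      simpa using T₂.root_mem
    refine ⟨.node (q, m + m') (some T₁) (some T₂),
      isRT_iff.2 ⟨⟨fun hl => absurd hf (hl.2 false), fun _ => ?_⟩, ?_⟩, rfl⟩
    · refine Or.inl ⟨hf, ht, ?_, ?_⟩
      · simpa [BTree.state, BTree.node, hT₁l, hT₂l] using hbr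
      · simp [BTree.counter, BTree.node, hT₁l, hT₂l]
    · rintro (_ | _) hb
      · rwa [BTree.subtree_node rfl]
      · rwa [BTree.subtree_node rfl]

theorem reachable_iff_reach {q : Q} {n : ℕ} : B.Reachable q n ↔ B.Reach q n := by
  refine ⟨?_, Reach.reachable⟩
  rintro ⟨T, hT, hTl⟩
  simpa [BTree.state, BTree.counter, hTl] using hT.reach

theorem Reach.coverable_zero {q : Q} {n : ℕ} (h : B.Reach q n) : B.Coverable q 0 :=
  ⟨n, n.zero_le, h.reachable⟩

def SideCoverable (B : BVASS1 Q) (t : BTrans Q) (p : Q) (n : ℕ) : Prop :=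
  (∀ q z p', t = .un q z p' → n = 0) ∧
  ∀ q a b, t = .br q a b → ∃ p', ((a = p ∧ p' = b) ∨ (b = p ∧ p' = a)) ∧ B.Coverable p' n

theorem sideCoverable_zero {t : BTrans Q} {p : Q} (hp : p ∈ t.tgts)
    (hcov : ∀ r ∈ t.tgts, B.Coverable r 0) : B.SideCoverable t p 0 := by
  refine ⟨fun _ _ _ _ => rfl, ?_⟩
  rintro q a b rfl
  simp only [BTrans.tgts, Set.mem_insert_iff, Set.mem_singleton_iff, forall_eq_or_imp,
    forall_eq] at hp hcov
  rcases hp with rfl | rfl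
  · exact ⟨b, Or.inl ⟨rfl, rfl⟩, hcov.2⟩
  · exact ⟨a, Or.inr ⟨rfl, rfl⟩, hcov.1⟩

theorem SideCoverable.mono {t : BTrans Q} {p : Q} {n n' : ℕ} (h : B.SideCoverable t p n)
    (hn : n' ≤ n) : B.SideCoverable t p n' :=
  ⟨fun q z p' ht => by have := h.1 q z p' ht; omega,
   fun q a b ht => (h.2 q a b ht).imp fun _ ⟨hp', m, hm, hr⟩ => ⟨hp', m, hn.trans hm, hr⟩⟩

theorem exists_side_gain {t : BTrans Q} {q p : Q} {n : ℕ} (ht : t.mem B) (hsrc : t.src = q)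
    (hp : p ∈ t.tgts) (hside : B.SideCoverable t p n) :
    ∃ m, n ≤ m ∧ ∀ x y : ℕ, B.Reach p x → (y : ℤ) = x + m - t.eff → B.Reach q y := by
  cases t with
  | un q' z p' =>
    obtain rfl : q' = q := hsrc
    obtain rfl : p = p' := hp
    refine ⟨0, (hside.1 _ _ _ rfl).le, fun x y hx hy => Reach.un ht hx ?_⟩
    simp only [BTrans.eff] at hy
    omega
  | br q' a b =>
    obtain rfl : q' = q := hsrc
    obtain ⟨p', hp', m, hnm, hm⟩ := hside.2 _ _ _ rfl
    refine ⟨m, hnm, fun x y hx hy => ?_⟩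
    obtain rfl : y = x + m := by simp only [BTrans.eff] at hy; omega
    rcases hp' with ⟨rfl, rfl⟩ | ⟨rfl, rfl⟩
    · exact Reach.br ht hx (reachable_iff_reach.1 hm)
    · exact add_comm m x ▸ Reach.br ht (reachable_iff_reach.1 hm) hx

def HasLassoWitness [Fintype Q] (B : BVASS1 Q) (p₀ : Q) : Prop :=
  ∃ (k : ℕ) (p : ℕ → Q) (t : ℕ → BTrans Q) (j : ℕ),
    k ≤ Fintype.card Q ∧ j < k ∧ p 0 = p₀ ∧
    (∀ i, 1 ≤ i → i ≤ k → (t i).mem B ∧ (t i).src = p (i - 1) ∧ p i ∈ (t i).tgts) ∧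
    p k = p j ∧ (∀ i < j, p i ≠ p j) ∧
    (∀ i, 1 ≤ i → i ≤ k → ∀ q ∈ (t i).tgts, B.Coverable q 0) ∧
    ∃ ns : ℕ → ℕ,
      (∀ i, j < i → i ≤ k → ns i ≤ Fintype.card Q + 1 ∧ B.SideCoverable (t i) (p i) (ns i)) ∧
      (∑ i ∈ Finset.Icc (j + 1) k, (t i).eff) < ∑ i ∈ Finset.Icc (j + 1) k, (ns i : ℤ)

theorem HasLassoWitness.reachSet_infinite [Fintype Q] {p₀ : Q} (h : B.HasLassoWitness p₀) :
    (B.reachSet p₀).Infinite := by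
  obtain ⟨k, p, t, j, -, hjk, rfl, hstep, hpk, -, hcov, ns, hns, hsum⟩ := h
  have hgain : ∀ i, ∃ m : ℕ, 1 ≤ i → i ≤ k → (j < i → ns i ≤ m) ∧
      ∀ x y : ℕ, B.Reach (p i) x → (y : ℤ) = x + m - (t i).eff → B.Reach (p (i - 1)) y := by
    intro i
    by_cases hi : 1 ≤ i ∧ i ≤ k
    · obtain ⟨hmem, hsrc, htgt⟩ := hstep i hi.1 hi.2
      by_cases hji : j < i
      · obtain ⟨m, hnm, hm⟩ := exists_side_gain hmem hsrc htgt (hns i hji hi.2).2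
        exact ⟨m, fun _ _ => ⟨fun _ => hnm, hm⟩⟩
      · obtain ⟨m, -, hm⟩ := exists_side_gain hmem hsrc htgt
          (sideCoverable_zero htgt (hcov i hi.1 hi.2))
        exact ⟨m, fun _ _ => ⟨fun h => absurd h hji, hm⟩⟩
    · exact ⟨0, fun h1 h2 => absurd ⟨h1, h2⟩ hi⟩
  choose m hm using hgain
  have hcycle : 0 < ∑ i ∈ Finset.Icc (j + 1) k, ((m i : ℤ) - (t i).eff) := by
    have hle : ∑ i ∈ Finset.Icc (j + 1) k, ((ns i : ℤ) - (t i).eff) ≤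
        ∑ i ∈ Finset.Icc (j + 1) k, ((m i : ℤ) - (t i).eff) :=
      Finset.sum_le_sum fun i hi => by
        rw [Finset.mem_Icc] at hi
        have := (hm i (by omega) hi.2).1 (by omega)
        omega
    rw [Finset.sum_sub_distrib] at hle
    omega
  have hinf := Pumping.infinite_of_cycle_gain (R := fun i x => B.Reach (p i) x)
    (fun i h1 h2 x y hx hy => (hm i h1 h2).2 x y hx (by omega)) hjk (fun x hx => hpk ▸ hx)
    (fun i hji hik => by
      obtain ⟨x, -, hx⟩ := hcov i (by omega) hik (p i) (hstep i (by omega) hik).2.2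
      exact ⟨x, reachable_iff_reach.1 hx⟩)
    hcycle
  simpa only [reachSet, reachable_iff_reach] using hinf

/-- A step of a path through a derivation tree: the transition `t` applied at the current node,
the target `dst` that the path enters, and the counter `side` of the other child (`0` if there is
none). -/
structure Move (Q : Type) where
  t : BTrans Q
  dst : Q
  side : ℕ

namespace Move

def src (e : Move Q) : Q := e.t.src

def gain (e : Move Q) : ℤ := e.side - e.t.eff

def Valid (B : BVASS1 Q) (e : Move Q) : Prop :=
  e.t.mem B ∧ e.dst ∈ e.t.tgts ∧ (∀ r ∈ e.t.tgts, B.Coverable r 0) ∧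
    B.SideCoverable e.t e.dst e.side

end Move

/-- A path from the root of a derivation of `q(n)` to a leaf that always enters the child with
the larger counter, so that the counter at most halves at each step. -/
inductive Descent (B : BVASS1 Q) : Q → ℕ → List (Move Q) → Prop
  | nil (q : Q) : B.Descent q 0 []
  | cons {e : Move Q} {n n' : ℕ} {l : List (Move Q)} : e.Valid B → B.Descent e.dst n' l →
      (n : ℤ) = n' + e.gain → n ≤ 2 * n' + 1 → B.Descent e.src n (e :: l)

theorem Reach.exists_descent {q : Q} {n : ℕ} (h : B.Reach q n) : ∃ l, B.Descent q n l := by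
  induction h with
  | final _ => exact ⟨[], .nil _⟩
  | @un q p z n n' hun hp hc ih =>
    obtain ⟨l, hl⟩ := ih
    have hz := B.un_small q z p hun
    have hv : Move.Valid B ⟨.un q z p, p, 0⟩ :=
      ⟨hun, rfl, by rintro r rfl; exact hp.coverable_zero,
        ⟨fun _ _ _ _ => rfl, nofun⟩⟩
    exact ⟨_, .cons hv hl (by simp only [Move.gain, BTrans.eff]; omega) (by omega)⟩
  | @br q a b m m' hbr ha hb iha ihb =>
    have hcov : ∀ r ∈ (BTrans.br q a b).tgts, B.Coverable r 0 := by
      rintro r (rfl | rfl)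
      exacts [ha.coverable_zero, hb.coverable_zero]
    rcases le_total m' m with hle | hle
    · obtain ⟨l, hl⟩ := iha
      have hv : Move.Valid B ⟨.br q a b, a, m'⟩ :=
        ⟨hbr, Or.inl rfl, hcov, ⟨nofun,
          by rintro _ _ _ ⟨⟩; exact ⟨b, Or.inl ⟨rfl, rfl⟩, m', le_rfl, hb.reachable⟩⟩⟩
      exact ⟨_, .cons hv hl (by simp [Move.gain, BTrans.eff]) (by omega)⟩
    · obtain ⟨l, hl⟩ := ihb
      have hv : Move.Valid B ⟨.br q a b, b, m⟩ :=
        ⟨hbr, Or.inr rfl, hcov, ⟨nofun,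
          by rintro _ _ _ ⟨⟩; exact ⟨a, Or.inr ⟨rfl, rfl⟩, m, le_rfl, ha.reachable⟩⟩⟩
      exact ⟨_, .cons hv hl (by simp [Move.gain, BTrans.eff]; ring) (by omega)⟩

namespace Descent

theorem valid {q : Q} {n : ℕ} {l : List (Move Q)} (h : B.Descent q n l) : ∀ e ∈ l, e.Valid B := by
  induction h with
  | nil => simp
  | cons he _ _ _ ih => exact List.forall_mem_cons.2 ⟨he, ih⟩

theorem split {x r : Q} {n : ℕ} {l : List (Move Q)} (h : B.Descent x n l)
    (hr : r ∈ x :: l.map Move.dst) :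
    ∃ l₁ l₂ v, l = l₁ ++ l₂ ∧ IsWalk Move.src Move.dst x l₁ r ∧ B.Descent r v l₂ ∧
      (n : ℤ) = v + (l₁.map Move.gain).sum := by
  induction h with
  | nil q =>
    obtain rfl : r = q := by simpa using hr
    exact ⟨[], [], 0, rfl, rfl, .nil _, by simp⟩
  | @cons e n n' l he ht hn hhalf ih =>
    by_cases hre : r = e.src
    · subst hre
      exact ⟨[], e :: l, n, rfl, rfl, .cons he ht hn hhalf, by simp⟩
    · obtain ⟨l₁, l₂, v, rfl, hw, hd, hv⟩ := ih (by simpa [hre] using hr)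
      exact ⟨e :: l₁, l₂, v, rfl, ⟨rfl, hw⟩, hd, by simp only [List.map_cons, List.sum_cons]; omega⟩

end Descent

/-- Unless the descent returns to a state with a smaller counter, the counter at the root is
below `2 ^ s`, where `s` is the number of states along the descent. -/
theorem Descent.exists_positive_cycle [DecidableEq Q] {q : Q} {n : ℕ} {l : List (Move Q)}
    (h : B.Descent q n l)
    (hn : 2 ^ (q :: l.map Move.dst).toFinset.card ≤ n) :
    ∃ l₁ C r, l₁ ++ C <+: l ∧ IsWalk Move.src Move.dst q l₁ r ∧
      IsWalk Move.src Move.dst r C r ∧ 0 < (C.map Move.gain).sum := by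
  induction hlen : l.length using Nat.strong_induction_on generalizing q n l with
  | _ len ih =>
  cases h with
  | nil => simp at hn
  | @cons e n n' l he ht hgain hhalf =>
    by_cases hrec : e.src ∈ e.dst :: l.map Move.dst
    · obtain ⟨l₁, l₂, v, rfl, hw, hd, hv⟩ := ht.split hrec
      by_cases hvn : v < n
      · refine ⟨[], e :: l₁, e.src, List.prefix_append _ _, rfl, ⟨rfl, hw⟩, ?_⟩
        simp only [List.map_cons, List.sum_cons]
        omega
      · have hcard : (e.src :: l₂.map Move.dst).toFinset.card ≤
            (e.src :: (e :: (l₁ ++ l₂)).map Move.dst).toFinset.card :=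
          Finset.card_le_card fun x => by simp; tauto
        obtain ⟨l₁', C, r, hpre, hw', hC, hpos⟩ := ih l₂.length (by simp at hlen ⊢; omega) hd
          ((Nat.pow_le_pow_right two_pos hcard).trans (by omega)) rfl
        refine ⟨e :: l₁ ++ l₁', C, r, ?_, isWalk_append.2 ⟨e.src, ⟨rfl, hw⟩, hw'⟩, hC, hpos⟩
        simpa only [List.append_assoc, List.cons_append] using
          (List.prefix_append_right_inj (e :: l₁)).2 hpre
    · have hcard : (e.src :: (e :: l).map Move.dst).toFinset.card =
          (e.dst :: l.map Move.dst).toFinset.card + 1 := by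
        rw [List.map_cons, List.toFinset_cons (a := e.src), Finset.card_insert_of_notMem]
        simpa using hrec
      rw [hcard, pow_succ] at hn
      obtain ⟨l₁, C, r, hpre, hw, hC, hpos⟩ := ih l.length (by simp at hlen ⊢; omega) ht
        (by omega) rfl
      exact ⟨e :: l₁, C, r, List.cons_prefix_cons.2 ⟨rfl, hpre⟩, ⟨rfl, hw⟩, hC, hpos⟩

/-- Side values may be capped at `c + 1` where `c` bounds the number of moves, because the
effects of the moves add at most `c`. -/
theorem sum_eff_lt_sum_min_side {ι : Type*} (s : Finset ι) (mv : ι → Move Q)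
    (hvalid : ∀ i ∈ s, (mv i).Valid B) (hgain : 0 < ∑ i ∈ s, (mv i).gain) {c : ℕ}
    (hc : s.card ≤ c) : ∑ i ∈ s, (mv i).t.eff < ∑ i ∈ s, ((min (mv i).side (c + 1) : ℕ) : ℤ) := by
  have heff : ∑ i ∈ s, (mv i).t.eff ≤ c :=
    calc _ ≤ ∑ i ∈ s, (1 : ℤ) := Finset.sum_le_sum fun i hi => BTrans.eff_le_one (hvalid i hi).1
      _ ≤ c := by rw [Finset.sum_const, nsmul_one]; exact_mod_cast hc
  have hside : ∑ i ∈ s, (mv i).t.eff < ((∑ i ∈ s, (mv i).side : ℕ) : ℤ) := by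
    simp only [Move.gain, Finset.sum_sub_distrib] at hgain
    push_cast
    omega
  have hmin := Finset.min_sum_le_sum_min s (fun i => (mv i).side) (c + 1)
  rw [← Nat.cast_sum]
  omega

theorem hasLassoWitness_of_lasso [Fintype Q] {p₀ r : Q} {stem cyc : List (Move Q)}
    (hstem : IsWalk Move.src Move.dst p₀ stem r) (hcyc : IsWalk Move.src Move.dst r cyc r)
    (hne : cyc ≠ []) (hvalid : ∀ e ∈ stem ++ cyc, e.Valid B)
    (hgain : 0 < (cyc.map Move.gain).sum) (hnodup : ((stem ++ cyc).map Move.src).Nodup) :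
    B.HasLassoWitness p₀ := by
  have hwalk : IsWalk Move.src Move.dst p₀ (stem ++ cyc) r := isWalk_append.2 ⟨r, hstem, hcyc⟩
  have hlen : (stem ++ cyc).length = stem.length + cyc.length := List.length_append
  generalize hF : stem ++ cyc = F at hvalid hnodup hwalk hlen
  let d : Move Q := ⟨.un p₀ 0 p₀, p₀, 0⟩
  obtain ⟨p, hp⟩ : ∃ p : ℕ → Q, ∀ i, p i = (p₀ :: F.map Move.dst).getD i p₀ := ⟨_, fun _ => rfl⟩
  -- `mv i` is the move from `p (i - 1)` to `p i`
  obtain ⟨mv, hmv⟩ : ∃ mv : ℕ → Move Q, ∀ i, mv i = F.getD (i - 1) d := ⟨_, fun _ => rfl⟩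
  have hp_succ : ∀ i, p (i + 1) = (mv (i + 1)).dst := fun i => by
    rw [hp, hmv, List.getD_cons_succ, Nat.add_sub_cancel]
    exact List.getD_map F d Move.dst
  have hp_src : ∀ i < F.length, p i = (mv (i + 1)).src := fun i h => by
    rw [hp, hmv, Nat.add_sub_cancel, List.getD_eq_getElem _ _ h]
    exact (hwalk.src_getElem p₀ h).symm
  have hmv_valid : ∀ i, 1 ≤ i → i ≤ F.length → (mv i).Valid B := fun i h1 h2 => by
    rw [hmv, List.getD_eq_getElem _ _ (by omega)]
    exact hvalid _ (List.getElem_mem _)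
  have hsum : ∀ f : Move Q → ℤ,
      ∑ i ∈ Finset.Icc (stem.length + 1) F.length, f (mv i) = (cyc.map f).sum := fun f => by
    simp only [hmv, ← hF]
    exact List.sum_Icc_getD_append f d stem cyc
  have hcard : F.length ≤ Fintype.card Q := by simpa using hnodup.length_le_card
  have hcyc_pos := List.length_pos_iff.2 hne
  refine ⟨F.length, p, fun i => (mv i).t, stem.length, hcard, by omega, by rw [hp]; rfl,
    fun i h1 h2 => ?_, ?_, fun i hi => ?_, fun i h1 h2 => (hmv_valid i h1 h2).2.2.1,
    fun i => min (mv i).side (Fintype.card Q + 1), fun i h1 h2 => ?_, ?_⟩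
  · obtain ⟨i, rfl⟩ : ∃ i', i = i' + 1 := ⟨i - 1, by omega⟩
    exact ⟨(hmv_valid _ h1 h2).1, (hp_src i (by omega)).symm,
      hp_succ i ▸ (hmv_valid _ h1 h2).2.1⟩
  · rw [hp, hp, hwalk.getD_length, ← hF, hstem.getD_length_append]
  · rw [hp, hp]
    exact hwalk.getD_ne_of_nodup hnodup p₀ hi (by omega)
  · obtain ⟨i, rfl⟩ : ∃ i', i = i' + 1 := ⟨i - 1, by omega⟩
    exact ⟨min_le_right _ _, hp_succ i ▸ (hmv_valid _ (by omega) h2).2.2.2.mono (min_le_left _ _)⟩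
  · refine sum_eff_lt_sum_min_side (B := B) _ _ (fun i hi => ?_) (hsum Move.gain ▸ hgain) ?_
    · rw [Finset.mem_Icc] at hi
      exact hmv_valid i (by omega) hi.2
    · rw [Nat.card_Icc]
      omega

theorem hasLassoWitness_of_reachSet_infinite [Fintype Q] {p₀ : Q}
    (h : (B.reachSet p₀).Infinite) : B.HasLassoWitness p₀ := by
  classical
  obtain ⟨N, hN, hbig⟩ := h.exists_gt (2 ^ Fintype.card Q)
  obtain ⟨l, hl⟩ := (reachable_iff_reach.1 hN).exists_descent
  obtain ⟨l₁, C, r, hpre, hw, hC, hpos⟩ := hl.exists_positive_cycle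
    ((Nat.pow_le_pow_right two_pos (Finset.card_le_univ _)).trans hbig.le)
  obtain ⟨stem, cyc, y, hsub, hne, hstem, hcyc, hgain, hnd⟩ := hw.exists_lasso Move.gain hC hpos
  exact hasLassoWitness_of_lasso hstem hcyc hne
    (fun e he => hl.valid e (hpre.subset (hsub e he))) hgain hnd

end BVASS1

/-- Characterisation of unbounded control states via short cyclic witness
sequences of states and transitions. -/
theorem stmt16 {Q : Type} [Fintype Q] (B : BVASS1 Q) (p₀ : Q) :
    (B.reachSet p₀).Infinite ↔
      ∃ (k : ℕ) (p : ℕ → Q) (t : ℕ → BTrans Q) (j : ℕ),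
        k ≤ Fintype.card Q ∧ j < k ∧ p 0 = p₀ ∧
        (∀ i, 1 ≤ i → i ≤ k →
          (t i).mem B ∧ (t i).src = p (i - 1) ∧ p i ∈ (t i).tgts) ∧
        p k = p j ∧ (∀ i < j, p i ≠ p j) ∧
        (∀ i, 1 ≤ i → i ≤ k → ∀ q ∈ (t i).tgts, B.Coverable q 0) ∧
        ∃ ns : ℕ → ℕ,
          (∀ i, j < i → i ≤ k →
            ns i ≤ Fintype.card Q + 1 ∧
            (∀ q z p', t i = .un q z p' → ns i = 0) ∧
            (∀ q a b, t i = .br q a b →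
              ∃ p', ((a = p i ∧ p' = b) ∨ (b = p i ∧ p' = a)) ∧
                B.Coverable p' (ns i))) ∧
          (∑ i ∈ Finset.Icc (j + 1) k, (t i).eff) <
            ∑ i ∈ Finset.Icc (j + 1) k, (ns i : ℤ) :=
  ⟨BVASS1.hasLassoWitness_of_reachSet_infinite, BVASS1.HasLassoWitness.reachSet_infinite⟩
end

section
/- In a partial reachability tree of a one-dimensional BVASS, if u ≺ v, state(u) = state(v), and counter(v) = counter(u) + d with d ≥ 1, and every leaf of the tree other than v is accepting, then for every k ≥ 0 the configuration state(u)(counter(u)) admits a partial reachability tree all of whose leaves are accepting except one leaf labelled state(u)(counter(u) + d + k·d). -/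
section Helpers

variable {Q : Type}

namespace BTree

lemma subtree_mem (T : BTree Q) (u : List Bool) (hu : u ∈ T.dom) (x : List Bool) :
    x ∈ (T.subtree u hu).dom ↔ u ++ x ∈ T.dom := Iff.rfl

lemma subtree_label (T : BTree Q) (u : List Bool) (hu : u ∈ T.dom) (x : List Bool) :
    (T.subtree u hu).label x = T.label (u ++ x) := rfl

lemma subtree_isLeaf_iff (T : BTree Q) (u : List Bool) (hu : u ∈ T.dom) (x : List Bool) :
    (T.subtree u hu).IsLeaf x ↔ T.IsLeaf (u ++ x) := by
  unfold IsLeaf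
  simp [subtree_mem, List.append_assoc]

/-- Add `m` to all counters on the path from the root to `p`. -/
def shift (T : BTree Q) (p : List Bool) (m : ℕ) : BTree Q where
  dom := T.dom
  label := fun x => if x <+: p then (T.state x, T.counter x + m) else T.label x
  finite := T.finite
  root_mem := T.root_mem
  prefixClosed := T.prefixClosed

lemma shift_mem (T : BTree Q) (p : List Bool) (m : ℕ) (x : List Bool) :
    x ∈ (T.shift p m).dom ↔ x ∈ T.dom := Iff.rfl

lemma shift_isLeaf_iff (T : BTree Q) (p : List Bool) (m : ℕ) (x : List Bool) :
    (T.shift p m).IsLeaf x ↔ T.IsLeaf x := Iff.rfl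

lemma shift_state (T : BTree Q) (p : List Bool) (m : ℕ) (x : List Bool) :
    (T.shift p m).state x = T.state x := by
  show (if x <+: p then (T.state x, T.counter x + m) else T.label x).1 = _
  split <;> rfl

lemma shift_counter_of_prefix (T : BTree Q) (p : List Bool) (m : ℕ) {x : List Bool}
    (h : x <+: p) : (T.shift p m).counter x = T.counter x + m := by
  show (if x <+: p then (T.state x, T.counter x + m) else T.label x).2 = _
  rw [if_pos h]

lemma shift_counter_of_not_prefix (T : BTree Q) (p : List Bool) (m : ℕ) {x : List Bool}
    (h : ¬ x <+: p) : (T.shift p m).counter x = T.counter x := by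
  show (if x <+: p then (T.state x, T.counter x + m) else T.label x).2 = _
  rw [if_neg h]
  rfl

lemma shift_label_of_prefix (T : BTree Q) (p : List Bool) (m : ℕ) {x : List Bool}
    (h : x <+: p) : (T.shift p m).label x = (T.state x, T.counter x + m) := by
  show (if x <+: p then (T.state x, T.counter x + m) else T.label x) = _
  rw [if_pos h]

lemma shift_label_of_not_prefix (T : BTree Q) (p : List Bool) (m : ℕ) {x : List Bool}
    (h : ¬ x <+: p) : (T.shift p m).label x = T.label x := by
  show (if x <+: p then (T.state x, T.counter x + m) else T.label x) = _
  rw [if_neg h]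

lemma IsLeaf.not_mem_append {T : BTree Q} {w : List Bool} (hw : T.IsLeaf w)
    {x : List Bool} (hx : x ≠ []) : w ++ x ∉ T.dom := by
  intro h
  obtain ⟨b, r, rfl⟩ := List.exists_cons_of_ne_nil hx
  exact hw.2 b (T.prefixClosed h ⟨r, by simp⟩)

/-- Graft the tree `T2` at the leaf `w` of `T1`. -/
noncomputable def graft (T1 T2 : BTree Q) (w : List Bool) (hw : T1.IsLeaf w) : BTree Q where
  dom := T1.dom ∪ (w ++ ·) '' T2.dom
  label := fun y => @ite _ (y ∈ T1.dom) (Classical.propDecidable _)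
    (T1.label y) (T2.label (y.drop w.length))
  finite := T1.finite.union (T2.finite.image _)
  root_mem := Set.mem_union_left _ T1.root_mem
  prefixClosed := by
    rintro a c hc hac
    rcases hc with hc | ⟨x, hx, rfl⟩
    · exact Set.mem_union_left _ (T1.prefixClosed hc hac)
    · rcases List.prefix_or_prefix_of_prefix hac (List.prefix_append w x) with h | h
      · exact Set.mem_union_left _ (T1.prefixClosed hw.1 h)
      · obtain ⟨a', rfl⟩ := h
        refine Set.mem_union_right _ ⟨a', T2.prefixClosed hx ?_, rfl⟩
        obtain ⟨t, ht⟩ := hac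
        have ht' : w ++ (a' ++ t) = w ++ x := by simpa using ht
        exact ⟨t, List.append_cancel_left ht'⟩

lemma graft_mem_iff (T1 T2 : BTree Q) (w : List Bool) (hw : T1.IsLeaf w) (y : List Bool) :
    y ∈ (T1.graft T2 w hw).dom ↔ y ∈ T1.dom ∨ ∃ x ∈ T2.dom, w ++ x = y := by
  show y ∈ T1.dom ∪ (w ++ ·) '' T2.dom ↔ _
  simp [Set.mem_union, Set.mem_image]

lemma graft_mem (T1 T2 : BTree Q) (w : List Bool) (hw : T1.IsLeaf w) (x : List Bool) :
    w ++ x ∈ (T1.graft T2 w hw).dom ↔ x ∈ T2.dom := by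
  rw [graft_mem_iff]
  constructor
  · rintro (h | ⟨x', hx', he⟩)
    · rcases eq_or_ne x [] with rfl | hne
      · exact T2.root_mem
      · exact absurd h (hw.not_mem_append hne)
    · exact (List.append_cancel_left he) ▸ hx'
  · intro h; exact Or.inr ⟨x, h, rfl⟩

lemma graft_label_left (T1 T2 : BTree Q) (w : List Bool) (hw : T1.IsLeaf w)
    {y : List Bool} (hy : y ∈ T1.dom) : (T1.graft T2 w hw).label y = T1.label y :=
  if_pos hy

lemma graft_label_append (T1 T2 : BTree Q) (w : List Bool) (hw : T1.IsLeaf w)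
    (hmatch : T1.label w = T2.label []) (x : List Bool) :
    (T1.graft T2 w hw).label (w ++ x) = T2.label x := by
  rcases eq_or_ne x [] with rfl | hne
  · rw [List.append_nil]
    exact (if_pos hw.1).trans hmatch
  · exact (if_neg (hw.not_mem_append hne)).trans (by rw [List.drop_left])

lemma graft_isLeaf_append (T1 T2 : BTree Q) (w : List Bool) (hw : T1.IsLeaf w)
    {x : List Bool} (hx : T2.IsLeaf x) : (T1.graft T2 w hw).IsLeaf (w ++ x) := by
  refine ⟨(graft_mem T1 T2 w hw x).2 hx.1, fun b hb => ?_⟩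
  rw [List.append_assoc] at hb
  exact hx.2 b ((graft_mem T1 T2 w hw (x ++ [b])).1 hb)

lemma graft_isLeaf_left (T1 T2 : BTree Q) (w : List Bool) (hw : T1.IsLeaf w)
    {y : List Bool} (hy : T1.IsLeaf y) (hne : y ≠ w) : (T1.graft T2 w hw).IsLeaf y := by
  refine ⟨(graft_mem_iff T1 T2 w hw y).2 (Or.inl hy.1), fun b hb => ?_⟩
  rcases (graft_mem_iff T1 T2 w hw (y ++ [b])).1 hb with hb | ⟨x, hx, he⟩
  · exact hy.2 b hb
  · rcases eq_or_ne x [] with rfl | hxne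
    · rw [List.append_nil] at he
      exact hy.2 b (he ▸ hw.1)
    · have hwp : w <+: y ++ [b] := ⟨x, he⟩
      have hyp : y <+: y ++ [b] := List.prefix_append y [b]
      rcases List.prefix_or_prefix_of_prefix hwp hyp with h | h
      · rcases eq_or_ne w y with rfl | hne2
        · exact hne rfl
        · obtain ⟨t, ht⟩ := h
          have htne : t ≠ [] := by rintro rfl; exact hne2 (by simpa using ht)
          exact hw.not_mem_append htne (ht ▸ hy.1)
      · obtain ⟨t, ht⟩ := h
        have htne : t ≠ [] := by rintro rfl; exact hne (by simpa using ht)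
        exact hy.not_mem_append htne (ht ▸ hw.1)

lemma graft_isLeaf_elim (T1 T2 : BTree Q) (w : List Bool) (hw : T1.IsLeaf w)
    {y : List Bool} (hy : (T1.graft T2 w hw).IsLeaf y) :
    (∃ x, y = w ++ x ∧ T2.IsLeaf x) ∨ (T1.IsLeaf y ∧ ¬ w <+: y) := by
  by_cases hwy : w <+: y
  · obtain ⟨x, rfl⟩ := hwy
    refine Or.inl ⟨x, rfl, (graft_mem T1 T2 w hw x).1 hy.1, fun b hb => ?_⟩
    refine hy.2 b ?_
    rw [List.append_assoc]
    exact (graft_mem T1 T2 w hw (x ++ [b])).2 hb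
  · rcases (graft_mem_iff T1 T2 w hw y).1 hy.1 with h | ⟨x, hx, rfl⟩
    · refine Or.inr ⟨⟨h, fun b hb => hy.2 b ?_⟩, hwy⟩
      · exact (graft_mem_iff T1 T2 w hw (y ++ [b])).2 (Or.inl hb)
    · exact absurd ⟨x, rfl⟩ hwy

end BTree

namespace BVASS1

open BTree

lemma subtree_isPRT (B : BVASS1 Q) {T : BTree Q} (hT : B.IsPRT T) (u : List Bool)
    (hu : u ∈ T.dom) : B.IsPRT (T.subtree u hu) := by
  intro x hx hnl
  have hx' : u ++ x ∈ T.dom := hx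
  have hnl' : ¬ T.IsLeaf (u ++ x) := fun h => hnl ((subtree_isLeaf_iff T u hu x).2 h)
  have h := hT (u ++ x) hx' hnl'
  simpa [subtree_mem, BTree.state, BTree.counter, subtree_label, List.append_assoc] using h

lemma shift_isPRT (B : BVASS1 Q) {T : BTree Q} (hT : B.IsPRT T) {p : List Bool}
    (hp : T.IsLeaf p) (m : ℕ) : B.IsPRT (T.shift p m) := by
  intro x hx hnl
  have hxT : x ∈ T.dom := hx
  have hnlT : ¬ T.IsLeaf x := fun h => hnl ((shift_isLeaf_iff T p m x).2 h)
  have hstate := shift_state T p m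
  by_cases hx1 : x <+: p
  · have hxne : x ≠ p := by rintro rfl; exact hnlT hp
    obtain ⟨r, hr⟩ := hx1
    have hrne : r ≠ [] := by rintro rfl; exact hxne (by simpa using hr)
    obtain ⟨b, r', rfl⟩ := List.exists_cons_of_ne_nil hrne
    have hbp : x ++ [b] <+: p := ⟨r', by rw [← hr]; simp⟩
    have hother : ∀ b' : Bool, b' ≠ b → ¬ x ++ [b'] <+: p := by
      rintro b' hb' ⟨s, hs⟩
      rw [← hr] at hs
      have hs' : x ++ (b' :: s) = x ++ (b :: r') := by simpa using hs
      have h2 : b' :: s = b :: r' := List.append_cancel_left hs'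
      exact hb' (by injection h2)
    rcases hT x hxT hnlT with ⟨hf, ht, hbr, hcnt⟩ | ⟨hf, ht, z, hun, hz⟩
    · cases b with
      | false =>
        refine Or.inl ⟨hf, ht, by rw [hstate, hstate, hstate]; exact hbr, ?_⟩
        rw [shift_counter_of_prefix T p m ⟨false :: r', hr⟩,
          shift_counter_of_prefix T p m hbp,
          shift_counter_of_not_prefix T p m (hother true (by simp))]
        omega
      | true =>
        refine Or.inl ⟨hf, ht, by rw [hstate, hstate, hstate]; exact hbr, ?_⟩
        rw [shift_counter_of_prefix T p m ⟨true :: r', hr⟩,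
          shift_counter_of_prefix T p m hbp,
          shift_counter_of_not_prefix T p m (hother false (by simp))]
        omega
    · have hbf : b = false := by
        by_contra hbf
        have hbt : b = true := by cases b <;> simp_all
        subst hbt
        exact ht (T.prefixClosed hp.1 hbp)
      subst hbf
      refine Or.inr ⟨hf, ht, z, by rw [hstate, hstate]; exact hun, ?_⟩
      rw [shift_counter_of_prefix T p m ⟨false :: r', hr⟩,
        shift_counter_of_prefix T p m hbp]
      push_cast
      push_cast at hz
      omega
  · have hnc : ∀ b : Bool, ¬ x ++ [b] <+: p := fun b h =>
      hx1 ((List.prefix_append x [b]).trans h)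
    rcases hT x hxT hnlT with ⟨hf, ht, hbr, hcnt⟩ | ⟨hf, ht, z, hun, hz⟩
    · refine Or.inl ⟨hf, ht, by rw [hstate, hstate, hstate]; exact hbr, ?_⟩
      rw [shift_counter_of_not_prefix T p m hx1,
        shift_counter_of_not_prefix T p m (hnc false),
        shift_counter_of_not_prefix T p m (hnc true)]
      exact hcnt
    · refine Or.inr ⟨hf, ht, z, by rw [hstate, hstate]; exact hun, ?_⟩
      rw [shift_counter_of_not_prefix T p m hx1,
        shift_counter_of_not_prefix T p m (hnc false)]
      exact hz

lemma graft_isPRT (B : BVASS1 Q) {T1 T2 : BTree Q} (h1 : B.IsPRT T1) (h2 : B.IsPRT T2)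
    {w : List Bool} (hw : T1.IsLeaf w) (hmatch : T1.label w = T2.label []) :
    B.IsPRT (T1.graft T2 w hw) := by
  intro y hy hnl
  by_cases hwy : w <+: y
  · obtain ⟨x, rfl⟩ := hwy
    have hx : x ∈ T2.dom := (graft_mem T1 T2 w hw x).1 hy
    have hxnl : ¬ T2.IsLeaf x := fun h => hnl (graft_isLeaf_append T1 T2 w hw h)
    have hmem : ∀ b : Bool, (w ++ x) ++ [b] ∈ (T1.graft T2 w hw).dom ↔ x ++ [b] ∈ T2.dom := by
      intro b
      rw [List.append_assoc]
      exact graft_mem T1 T2 w hw (x ++ [b])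
    have hlab : ∀ x', (T1.graft T2 w hw).label (w ++ x') = T2.label x' :=
      graft_label_append T1 T2 w hw hmatch
    have hst : ∀ x', (T1.graft T2 w hw).state (w ++ x') = T2.state x' := by
      intro x'; unfold BTree.state; rw [hlab]
    have hct : ∀ x', (T1.graft T2 w hw).counter (w ++ x') = T2.counter x' := by
      intro x'; unfold BTree.counter; rw [hlab]
    rcases h2 x hx hxnl with ⟨hf, ht, hbr, hcnt⟩ | ⟨hf, ht, z, hun, hz⟩
    · refine Or.inl ⟨(hmem false).2 hf, (hmem true).2 ht, ?_, ?_⟩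
      · rw [List.append_assoc, List.append_assoc, hst, hst, hst]; exact hbr
      · rw [List.append_assoc, List.append_assoc, hct, hct, hct]; exact hcnt
    · refine Or.inr ⟨(hmem false).2 hf, fun h => ht ((hmem true).1 h), z, ?_, ?_⟩
      · rw [List.append_assoc, hst, hst]; exact hun
      · rw [List.append_assoc, hct, hct]; exact hz
  · have hy1 : y ∈ T1.dom := by
      rcases (graft_mem_iff T1 T2 w hw y).1 hy with h | ⟨x, hx, rfl⟩
      · exact h
      · exact absurd ⟨x, rfl⟩ hwy
    have hyw : y ≠ w := by rintro rfl; exact hwy (List.prefix_refl y)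
    have hynl : ¬ T1.IsLeaf y := fun h => hnl (graft_isLeaf_left T1 T2 w hw h hyw)
    have hnot : y ++ [true] ∉ T1.dom → y ++ [true] ∉ (T1.graft T2 w hw).dom := by
      intro hnt hmem
      rcases (graft_mem_iff T1 T2 w hw (y ++ [true])).1 hmem with h | ⟨x, hx, he⟩
      · exact hnt h
      · have hwp : w <+: y ++ [true] := ⟨x, he⟩
        have hyp : y <+: y ++ [true] := List.prefix_append y [true]
        rcases List.prefix_or_prefix_of_prefix hwp hyp with h | h
        · exact hwy h
        · have hcase : w = y ∨ w = y ++ [true] := by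
            have hl1 : w.length ≤ y.length + 1 := by simpa using hwp.length_le
            have hl2 : y.length ≤ w.length := h.length_le
            rcases Nat.lt_or_ge y.length w.length with hlt | hge
            · exact Or.inr (hwp.eq_of_length (by simp; omega))
            · exact Or.inl ((h.eq_of_length (le_antisymm hl2 hge)).symm)
          rcases hcase with rfl | heq
          · exact hwy (List.prefix_refl w)
          · exact hnt (heq ▸ hw.1)
    have hst : ∀ y', y' ∈ T1.dom → (T1.graft T2 w hw).state y' = T1.state y' := by
      intro y' hy'; unfold BTree.state; rw [graft_label_left T1 T2 w hw hy']
    have hct : ∀ y', y' ∈ T1.dom → (T1.graft T2 w hw).counter y' = T1.counter y' := by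
      intro y' hy'; unfold BTree.counter; rw [graft_label_left T1 T2 w hw hy']
    rcases h1 y hy1 hynl with ⟨hf, ht, hbr, hcnt⟩ | ⟨hf, ht, z, hun, hz⟩
    · refine Or.inl ⟨(graft_mem_iff T1 T2 w hw _).2 (Or.inl hf),
        (graft_mem_iff T1 T2 w hw _).2 (Or.inl ht), ?_, ?_⟩
      · rw [hst y hy1, hst _ hf, hst _ ht]; exact hbr
      · rw [hct y hy1, hct _ hf, hct _ ht]; exact hcnt
    · refine Or.inr ⟨(graft_mem_iff T1 T2 w hw _).2 (Or.inl hf), hnot ht, z, ?_, ?_⟩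
      · rw [hst y hy1, hst _ hf]; exact hun
      · rw [hct y hy1, hct _ hf]; exact hz

end BVASS1

end Helpers

/-- Pumping construction: repeating the segment between two equal-state nodes whose
counter increases by `d` yields, for every `k`, a partial reachability tree for the
lower configuration with a single non-accepting leaf at counter `counter(u)+d+k·d`. -/
theorem stmt17 {Q : Type} (B : BVASS1 Q) (T : BTree Q) (hT : B.IsPRT T)
    (u v : List Bool) (hu : u ∈ T.dom) (hv : T.IsLeaf v)
    (huv : StrictPrefix u v) (hs : T.state u = T.state v) (d : ℕ) (hd : 1 ≤ d)
    (hc : T.counter v = T.counter u + d)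
    (hleaves : ∀ w, T.IsLeaf w → w ≠ v → B.final (T.state w) ∧ T.counter w = 0) :
    ∀ k : ℕ, ∃ T' : BTree Q, B.IsPRT T' ∧ T'.label [] = (T.state u, T.counter u) ∧
      ∃ w, T'.IsLeaf w ∧ T'.label w = (T.state u, T.counter u + d + k * d) ∧
        ∀ w', T'.IsLeaf w' → w' ≠ w → B.final (T'.state w') ∧ T'.counter w' = 0 := by
  classical
  obtain ⟨p, rfl⟩ := huv.1
  have hpne : p ≠ [] := by rintro rfl; exact huv.2 (by simp)
  set q := T.state u with hq
  set c := T.counter u with hcdef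
  set S := T.subtree u hu with hSdef
  have hSprt : B.IsPRT S := B.subtree_isPRT hT u hu
  have hpS : S.IsLeaf p := (BTree.subtree_isLeaf_iff T u hu p).2 hv
  have hSroot : S.label [] = (q, c) := by
    show T.label (u ++ []) = _
    rw [List.append_nil]
    rfl
  have hSp : S.label p = (q, c + d) := by
    show T.label (u ++ p) = _
    have h1 : T.label (u ++ p) = (T.state (u ++ p), T.counter (u ++ p)) := rfl
    rw [h1, ← hs, hc]
  have hSleaves : ∀ x, S.IsLeaf x → x ≠ p → B.final (S.state x) ∧ S.counter x = 0 := by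
    intro x hx hxp
    exact hleaves (u ++ x) ((BTree.subtree_isLeaf_iff T u hu x).1 hx)
      (fun h => hxp (List.append_cancel_left h))
  have hnotpre : ∀ x, S.IsLeaf x → x ≠ p → ¬ x <+: p := by
    rintro x hx hxp ⟨r, hr⟩
    have hrne : r ≠ [] := by rintro rfl; exact hxp (by simpa using hr)
    obtain ⟨b, r', rfl⟩ := List.exists_cons_of_ne_nil hrne
    exact hx.2 b (S.prefixClosed hpS.1 ⟨r', by rw [← hr]; simp⟩)
  have hSmroot : ∀ m : ℕ, (S.shift p m).label [] = (q, c + m) := by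
    intro m
    rw [BTree.shift_label_of_prefix S p m List.nil_prefix]
    have h1 : S.state [] = q := by unfold BTree.state; rw [hSroot]
    have h2 : S.counter [] = c := by unfold BTree.counter; rw [hSroot]
    rw [h1, h2]
  have hSmp : ∀ m : ℕ, (S.shift p m).label p = (q, c + d + m) := by
    intro m
    rw [BTree.shift_label_of_prefix S p m (List.prefix_refl p)]
    have h1 : S.state p = q := by unfold BTree.state; rw [hSp]
    have h2 : S.counter p = c + d := by unfold BTree.counter; rw [hSp]
    rw [h1, h2]
  have hSmleaves : ∀ (m : ℕ) x, (S.shift p m).IsLeaf x → x ≠ p →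
      B.final ((S.shift p m).state x) ∧ (S.shift p m).counter x = 0 := by
    intro m x hx hxp
    have hxS : S.IsLeaf x := (BTree.shift_isLeaf_iff S p m x).1 hx
    have hnp := hnotpre x hxS hxp
    have h1 : (S.shift p m).state x = S.state x := BTree.shift_state S p m x
    have h2 : (S.shift p m).counter x = S.counter x :=
      BTree.shift_counter_of_not_prefix S p m hnp
    rw [h1, h2]
    exact hSleaves x hxS hxp
  intro k
  induction k with
  | zero =>
    refine ⟨S.shift p 0, B.shift_isPRT hSprt hpS 0, ?_, p,
      (BTree.shift_isLeaf_iff S p 0 p).2 hpS, ?_, ?_⟩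
    · rw [hSmroot 0]
      simp
    · rw [hSmp 0]; simp
    · intro w' hw' hne
      exact hSmleaves 0 w' hw' hne
  | succ k ih =>
    obtain ⟨T', hprt', hroot', w, hwleaf, hwlab, hacc'⟩ := ih
    set m := d + k * d with hm
    have hmatch : T'.label w = (S.shift p m).label [] := by
      rw [hwlab, hSmroot m]
      have h3 : c + d + k * d = c + m := by rw [hm]; ring
      rw [h3]
    have hprtG : B.IsPRT (T'.graft (S.shift p m) w hwleaf) :=
      B.graft_isPRT hprt' (B.shift_isPRT hSprt hpS m) hwleaf hmatch
    refine ⟨T'.graft (S.shift p m) w hwleaf, hprtG, ?_, w ++ p,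
      BTree.graft_isLeaf_append T' (S.shift p m) w hwleaf
        ((BTree.shift_isLeaf_iff S p m p).2 hpS), ?_, ?_⟩
    · rw [BTree.graft_label_left T' (S.shift p m) w hwleaf T'.root_mem, hroot']
    · rw [BTree.graft_label_append T' (S.shift p m) w hwleaf hmatch, hSmp m]
      have : c + d + m = c + d + (k + 1) * d := by rw [hm]; ring
      rw [this]
    · intro w' hw' hne
      rcases BTree.graft_isLeaf_elim T' (S.shift p m) w hwleaf hw' with
        ⟨x, rfl, hx⟩ | ⟨hy, hnpre⟩
      · have hxp : x ≠ p := fun h => hne (by rw [h])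
        have := hSmleaves m x hx hxp
        have hst : (T'.graft (S.shift p m) w hwleaf).state (w ++ x) = (S.shift p m).state x := by
          unfold BTree.state
          rw [BTree.graft_label_append T' (S.shift p m) w hwleaf hmatch]
        have hct : (T'.graft (S.shift p m) w hwleaf).counter (w ++ x) = (S.shift p m).counter x := by
          unfold BTree.counter
          rw [BTree.graft_label_append T' (S.shift p m) w hwleaf hmatch]
        rw [hst, hct]
        exact this
      · have hyw : w' ≠ w := by rintro rfl; exact hnpre (List.prefix_refl w')
        have := hacc' w' hy hyw
        have hst : (T'.graft (S.shift p m) w hwleaf).state w' = T'.state w' := by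
          unfold BTree.state
          rw [BTree.graft_label_left T' (S.shift p m) w hwleaf hy.1]
        have hct : (T'.graft (S.shift p m) w hwleaf).counter w' = T'.counter w' := by
          unfold BTree.counter
          rw [BTree.graft_label_left T' (S.shift p m) w hwleaf hy.1]
        rw [hst, hct]
        exact this
end

section
/- In an exclusive, B-bounded partial reachability tree of a one-dimensional BVASS with B ≥ 2·|Q|, if a node w has two children w0 and w1 with counter(w) ≤ B, then counter(w0) ≤ B/2 or counter(w1) ≤ B/2, and if counter(wb) ≤ B/2 for b ∈ {0,1} then any descendant path from wb reaching counter value B contains an increasing node together with its anchor strictly below wb. -/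
section Aux

variable {Q : Type}

/-- Along any edge of a partial reachability tree the counter increases by at most 1. -/
lemma aux_step_le (B : BVASS1 Q) (T : BTree Q) (hT : B.IsPRT T)
    {u : List Bool} {b : Bool} (h : u ++ [b] ∈ T.dom) :
    T.counter (u ++ [b]) ≤ T.counter u + 1 := by
  have hu : u ∈ T.dom := T.prefixClosed h ⟨[b], rfl⟩
  have hnl : ¬ T.IsLeaf u := fun hl => hl.2 b h
  rcases hT u hu hnl with ⟨-, -, -, hc⟩ | ⟨h0', h1', z, hz, hc⟩
  · cases b <;> omega
  · cases b
    · rcases B.un_small _ _ _ hz with rfl | rfl | rfl <;> omega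
    · exact absurd h h1'

/-- Intermediate value theorem along a path: every counter value between the endpoints
is attained. -/
lemma aux_ivt (B : BVASS1 Q) (T : BTree Q) (hT : B.IsPRT T) :
    ∀ (s p : List Bool), p ++ s ∈ T.dom → ∀ m, T.counter p < m → m ≤ T.counter (p ++ s) →
      ∃ y, p <+: y ∧ y <+: p ++ s ∧ T.counter y = m := by
  intro s
  induction s with
  | nil => intro p h m h1 h2; simp only [List.append_nil] at h2; omega
  | cons b s' ih =>
    intro p h m h1 h2
    have hps : p ++ [b] ++ s' = p ++ (b :: s') := by simp
    have h' : p ++ [b] ++ s' ∈ T.dom := by rw [hps]; exact h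
    have hp' : p ++ [b] ∈ T.dom := T.prefixClosed h' ⟨s', rfl⟩
    have hle := aux_step_le B T hT hp'
    by_cases hm : m ≤ T.counter (p ++ [b])
    · exact ⟨p ++ [b], ⟨[b], rfl⟩, ⟨s', hps⟩, by omega⟩
    · obtain ⟨y, hy1, hy2, hy3⟩ := ih (p ++ [b]) h' m (by omega) (by rw [hps]; exact h2)
      exact ⟨y, (List.prefix_append p [b]).trans hy1, hps ▸ hy2, hy3⟩

end Aux

/-- In an exclusive `Bd`-bounded partial reachability tree with `Bd ≥ 2|Q|`, at any
branching node one child's counter is at most `Bd/2`, and from such a child any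
descendant path reaching counter `Bd` contains an increasing node with its anchor
below that child. -/
theorem stmt18 {Q : Type} [Fintype Q] (B : BVASS1 Q) (T : BTree Q) (Bd : ℕ)
    (hT : B.IsPRT T) (hex : T.Exclusive) (hbd : T.Bounded Bd)
    (hB : 2 * Fintype.card Q ≤ Bd)
    (w : List Bool) (h0 : w ++ [false] ∈ T.dom) (h1 : w ++ [true] ∈ T.dom)
    (hw : T.counter w ≤ Bd) :
    (2 * T.counter (w ++ [false]) ≤ Bd ∨ 2 * T.counter (w ++ [true]) ≤ Bd) ∧
      ∀ b : Bool, 2 * T.counter (w ++ [b]) ≤ Bd →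
        ∀ x ∈ T.dom, (w ++ [b]) <+: x → T.counter x = Bd →
          ∃ v' a, T.IsAnchorOf a v' ∧ (w ++ [b]) <+: a ∧ StrictPrefix a v' ∧
            v' <+: x := by
  classical
  have hwdom : w ∈ T.dom := T.prefixClosed h0 ⟨[false], rfl⟩
  have hnl : ¬ T.IsLeaf w := fun hl => hl.2 false h0
  have hsum : T.counter w = T.counter (w ++ [false]) + T.counter (w ++ [true]) := by
    rcases hT w hwdom hnl with ⟨-, -, -, hc⟩ | ⟨-, h1', -⟩
    · exact hc
    · exact absurd h1 h1'
  refine ⟨by omega, ?_⟩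
  intro b hb x hx hpre hxB
  have hQpos : 0 < Fintype.card Q := Fintype.card_pos_iff.mpr ⟨T.state w⟩
  have hwb : w ++ [b] ∈ T.dom := by cases b <;> assumption
  set P := w ++ [b] with hP
  set c := T.counter P with hc
  -- for each m ∈ (c, Bd], the *last* node on the path from P to x with counter m
  have hkey : ∀ m, c < m → m ≤ Bd → ∃ y, P <+: y ∧ y <+: x ∧ T.counter y = m ∧
      ∀ z, P <+: z → z <+: x → T.counter z = m → z <+: y := by
    intro m hm1 hm2
    obtain ⟨s, hs⟩ := hpre
    obtain ⟨y0, hy01, hy02, hy03⟩ := aux_ivt B T hT s P (by rw [hs]; exact hx) m hm1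
      (by rw [hs, hxB]; exact hm2)
    rw [hs] at hy02
    set F : Finset ℕ := (Finset.range (x.length + 1)).filter
      (fun n => P <+: x.take n ∧ T.counter (x.take n) = m) with hF
    have hmemF : ∀ z, P <+: z → z <+: x → T.counter z = m →
        z.length ∈ F ∧ x.take z.length = z := by
      intro z hz1 hz2 hz3
      have hzt : x.take z.length = z := (List.prefix_iff_eq_take.mp hz2).symm
      refine ⟨Finset.mem_filter.mpr ⟨Finset.mem_range.mpr (Nat.lt_succ_of_le hz2.length_le),
        ?_, ?_⟩, hzt⟩
      · rw [hzt]; exact hz1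
      · rw [hzt]; exact hz3
    have hFne : F.Nonempty := ⟨y0.length, (hmemF y0 hy01 hy02 hy03).1⟩
    obtain ⟨-, hN2, hN3⟩ := Finset.mem_filter.mp (F.max'_mem hFne)
    refine ⟨x.take (F.max' hFne), hN2, List.take_prefix _ _, hN3, ?_⟩
    intro z hz1 hz2 hz3
    obtain ⟨hzF, hzt⟩ := hmemF z hz1 hz2 hz3
    have hle : z.length ≤ F.max' hFne := F.le_max' _ hzF
    have hzz : (x.take (F.max' hFne)).take z.length = z := by
      rw [List.take_take, min_eq_left hle, hzt]
    exact hzz ▸ List.take_prefix _ _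
  choose! y hy1 hy2 hy3 hy4 using hkey
  -- every node strictly after `y m` on the path has counter > m
  have hafter : ∀ m, c < m → m ≤ Bd → ∀ z, P <+: z → z <+: x →
      y m <+: z → y m ≠ z → m < T.counter z := by
    intro m hm1 hm2 z hz1 hz2 hyz hne
    by_contra hlt
    push_neg at hlt
    have hlen : (y m).length < z.length := by
      have h1 := hyz.length_le
      rcases Nat.lt_or_ge (y m).length z.length with h | h
      · exact h
      · exact absurd (hyz.eq_of_length (le_antisymm h1 h)) hne
    rcases Nat.lt_or_ge (T.counter z) m with h | h
    · obtain ⟨s, hs⟩ := hz2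
      obtain ⟨y', hy'1, hy'2, hy'3⟩ := aux_ivt B T hT s z (by rw [hs]; exact hx) m h
        (by rw [hs, hxB]; exact hm2)
      rw [hs] at hy'2
      have h4 := (hy4 m hm1 hm2 y' (hz1.trans hy'1) hy'2 hy'3).length_le
      have h5 := hy'1.length_le
      omega
    · have hzm : T.counter z = m := le_antisymm hlt h
      have h4 := (hy4 m hm1 hm2 z hz1 hz2 hzm).length_le
      omega
  set g : ℕ → List Bool := fun k => if k = 0 then P else y (c + k) with hg
  have hga : ∀ k, k ≤ Bd - c → P <+: g k ∧ g k <+: x ∧ T.counter (g k) = c + k := by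
    intro k hk
    rcases Nat.eq_zero_or_pos k with rfl | hkpos
    · exact ⟨List.prefix_refl _, hpre, by simp [hg, ← hc]⟩
    · have hk0 : k ≠ 0 := by omega
      have h1 : c < c + k := by omega
      have h2 : c + k ≤ Bd := by omega
      have hgk : g k = y (c + k) := by simp [hg, hk0]
      rw [hgk]
      exact ⟨hy1 _ h1 h2, hy2 _ h1 h2, hy3 _ h1 h2⟩
  have hchain : ∀ i j, i < j → j ≤ Bd - c → g i <+: g j ∧ g i ≠ g j := by
    intro i j hij hj
    obtain ⟨hi1, hi2, hi3⟩ := hga i (by omega)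
    obtain ⟨hj1, hj2, hj3⟩ := hga j hj
    have hne : g i ≠ g j := fun h => by rw [h, hj3] at hi3; omega
    rcases List.prefix_or_prefix_of_prefix hi2 hj2 with h | h
    · exact ⟨h, hne⟩
    · exfalso
      have hj0 : j ≠ 0 := by omega
      have hgj : g j = y (c + j) := by simp [hg, hj0]
      rw [hgj] at h
      have hne' := hne.symm
      rw [hgj] at hne'
      have := hafter (c + j) (by omega) (by omega) (g i) hi1 hi2 h hne'
      omega
  -- pigeonhole on states
  have hcard : Fintype.card Q < Bd - c + 1 := by omega
  obtain ⟨i, j, hij, hstate⟩ := Fintype.exists_ne_map_eq_of_card_lt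
    (fun k : Fin (Bd - c + 1) => T.state (g k)) (by simpa using hcard)
  have main : ∀ i j : ℕ, i < j → j ≤ Bd - c → T.state (g i) = T.state (g j) →
      ∃ v' a, T.IsAnchorOf a v' ∧ P <+: a ∧ StrictPrefix a v' ∧ v' <+: x := by
    intro i j hij hj hst
    obtain ⟨hi1, hi2, hi3⟩ := hga i (by omega)
    obtain ⟨hj1, hj2, hj3⟩ := hga j hj
    obtain ⟨hpre', hne⟩ := hchain i j hij hj
    set v' := g j with hv'
    have hcnt : T.counter (g i) < T.counter v' := by omega
    set A : Finset ℕ := (Finset.range (v'.length + 1)).filter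
      (fun n => v'.take n ∈ T.dom ∧ v'.take n ≠ v' ∧
        T.state (v'.take n) = T.state v' ∧ T.counter (v'.take n) < T.counter v') with hA
    have hmemA : ∀ u', u' ∈ T.dom → StrictPrefix u' v' → T.state u' = T.state v' →
        T.counter u' < T.counter v' → u'.length ∈ A ∧ v'.take u'.length = u' := by
      rintro u' hd ⟨hp, hne'⟩ hs hc'
      have ht : v'.take u'.length = u' := (List.prefix_iff_eq_take.mp hp).symm
      refine ⟨Finset.mem_filter.mpr ⟨Finset.mem_range.mpr (Nat.lt_succ_of_le hp.length_le),
        ?_, ?_, ?_, ?_⟩, ht⟩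
      · rw [ht]; exact hd
      · rw [ht]; exact hne'
      · rw [ht]; exact hs
      · rw [ht]; exact hc'
    have hgidom : g i ∈ T.dom := T.prefixClosed hx hi2
    have hAne : A.Nonempty := ⟨(g i).length, (hmemA (g i) hgidom ⟨hpre', hne⟩ hst hcnt).1⟩
    obtain ⟨-, hN1, hN2, hN3, hN4⟩ := Finset.mem_filter.mp (A.max'_mem hAne)
    refine ⟨v', v'.take (A.max' hAne), ⟨hN1, ⟨List.take_prefix _ _, hN2⟩, hN3, hN4, ?_⟩,
      ?_, ⟨List.take_prefix _ _, hN2⟩, hj2⟩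
    · intro u' hd hsp hs hc'
      obtain ⟨hmem, ht⟩ := hmemA u' hd hsp hs hc'
      have hle : u'.length ≤ A.max' hAne := A.le_max' _ hmem
      have huu : (v'.take (A.max' hAne)).take u'.length = u' := by
        rw [List.take_take, min_eq_left hle, ht]
      exact huu ▸ List.take_prefix _ _
    · have hmem := (hmemA (g i) hgidom ⟨hpre', hne⟩ hst hcnt)
      have hle : (g i).length ≤ A.max' hAne := A.le_max' _ hmem.1
      have huu : (v'.take (A.max' hAne)).take (g i).length = g i := by
        rw [List.take_take, min_eq_left hle, hmem.2]
      exact hi1.trans (huu ▸ List.take_prefix _ _)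
  have hijne : (i : ℕ) ≠ (j : ℕ) := fun h => hij (Fin.ext h)
  rcases hijne.lt_or_gt with hlt | hlt
  · exact main i j hlt (Nat.lt_succ_iff.mp j.isLt) hstate
  · exact main j i hlt (Nat.lt_succ_iff.mp i.isLt) hstate.symm
end
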